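/- Define A = (ℕ₀ × ℕ₀) ∪ {⊤} with the total order given by lexicographic order on ℕ₀ × ℕ₀ and ⊤ as top element, with Gödel chain operations (min, max, Gödel implication, bottom (0,0), top ⊤), and quantifiers ∃⊤ = ∀⊤ = ⊤, ∀(a,b) = (a,0), ∃(a,b) = (a,0) if b = 0 and (a+1,0) if b ≠ 0. Then A is a monadic Gödel algebra, i.e., it satisfies axioms (M1)–(M4). -/

import Mathlib

/-- The chain `(ℕ₀ × ℕ₀) ∪ {⊤}` with the lexicographic order. -/
abbrev A18 : Type := WithTop (ℕ ×ₗ ℕ)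

/-- Gödel implication on the chain `A18`. -/
noncomputable def gimp (x y : A18) : A18 := if x ≤ y then ⊤ else y

/-- The universal quantifier: `∀(a,b) = (a,0)`, `∀⊤ = ⊤`. -/
def qU : A18 → A18 :=
  WithTop.map fun p : ℕ ×ₗ ℕ => toLex ((ofLex p).1, 0)

/-- The existential quantifier: `∃(a,0) = (a,0)`, `∃(a,b) = (a+1,0)` for `b ≠ 0`,
`∃⊤ = ⊤`. -/
def qE : A18 → A18 :=
  WithTop.map fun p : ℕ ×ₗ ℕ =>
    if (ofLex p).2 = 0 then toLex ((ofLex p).1, 0) else toLex ((ofLex p).1 + 1, 0)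

/-! The quantifiers are the relative interior and closure with respect to the subchain
`B = {(a, 0)} ∪ {⊤}`: `∀x` is the largest element of `B` below `x` and `∃x` the least element of
`B` above `x`. Axioms (M1)–(M4) hold on any chain for such a pair of operators, because `B`
contains `⊤` and is therefore closed under the Gödel implication and `⊔`; comparing `x` with the
relevant element of `B` reduces each axiom to two cases. -/

section GodelImp

variable {α : Type*} [LinearOrder α] [OrderTop α]

def godelImp (x y : α) : α := if x ≤ y then ⊤ else y

theorem godelImp_of_le {x y : α} (h : x ≤ y) : godelImp x y = ⊤ := if_pos h

theorem godelImp_of_lt {x y : α} (h : y < x) : godelImp x y = y := if_neg h.not_ge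

end GodelImp

section RelativeInteriorClosure

variable {α : Type*} [LinearOrder α] {B : Set α} {U E : α → α}

theorem interior_eq_self_of_mem (hU : ∀ x, IsGreatest {b | b ∈ B ∧ b ≤ x} (U x)) {b : α}
    (hb : b ∈ B) : U b = b :=
  le_antisymm (hU b).1.2 ((hU b).2 ⟨hb, le_rfl⟩)

theorem interior_closure_sup (hU : ∀ x, IsGreatest {b | b ∈ B ∧ b ≤ x} (U x))
    (hE : ∀ x, IsLeast {b | b ∈ B ∧ x ≤ b} (E x)) (x y : α) :
    U (E x ⊔ y) = E x ⊔ U y := by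
  rcases le_total y (E x) with h | h
  · rw [sup_eq_left.2 h, sup_eq_left.2 ((hU y).1.2.trans h),
      interior_eq_self_of_mem hU (hE x).1.1]
  · rw [sup_eq_right.2 h, sup_eq_right.2 ((hU y).2 ⟨(hE x).1.1, h⟩)]

variable [OrderTop α]

theorem interior_godelImp_interior_right (hB : ⊤ ∈ B)
    (hU : ∀ x, IsGreatest {b | b ∈ B ∧ b ≤ x} (U x))
    (hE : ∀ x, IsLeast {b | b ∈ B ∧ x ≤ b} (E x)) (x y : α) :
    U (godelImp x (U y)) = godelImp (E x) (U y) := by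
  rcases le_or_gt x (U y) with h | h
  · have hE_le : E x ≤ U y := (hE x).2 ⟨(hU y).1.1, h⟩
    rw [godelImp_of_le h, godelImp_of_le hE_le, interior_eq_self_of_mem hU hB]
  · rw [godelImp_of_lt h, godelImp_of_lt (h.trans_le (hE x).1.2),
      interior_eq_self_of_mem hU (hU y).1.1]

theorem interior_godelImp_interior_left (hB : ⊤ ∈ B)
    (hU : ∀ x, IsGreatest {b | b ∈ B ∧ b ≤ x} (U x)) (x y : α) :
    U (godelImp (U x) y) = godelImp (U x) (U y) := by
  rcases le_or_gt (U x) y with h | h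
  · rw [godelImp_of_le h, godelImp_of_le ((hU y).2 ⟨(hU x).1.1, h⟩),
      interior_eq_self_of_mem hU hB]
  · rw [godelImp_of_lt h, godelImp_of_lt ((hU y).1.2.trans_lt h)]

end RelativeInteriorClosure

namespace A18

theorem induction {motive : A18 → Prop} (top : motive ⊤)
    (coe : ∀ a b : ℕ, motive (toLex (a, b) : ℕ ×ₗ ℕ)) (x : A18) : motive x := by
  induction x using WithTop.recTopCoe with
  | top => exact top
  | coe p => exact coe (ofLex p).1 (ofLex p).2

end A18

@[simp]
theorem qU_top : qU ⊤ = ⊤ := rfl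

@[simp]
theorem qU_coe (a b : ℕ) : qU (toLex (a, b) : ℕ ×ₗ ℕ) = (toLex (a, 0) : ℕ ×ₗ ℕ) := rfl

@[simp]
theorem qE_top : qE ⊤ = ⊤ := rfl

@[simp]
theorem qE_coe (a b : ℕ) :
    qE (toLex (a, b) : ℕ ×ₗ ℕ) = (toLex (if b = 0 then a else a + 1, 0) : ℕ ×ₗ ℕ) := by
  by_cases hb : b = 0 <;> simp [qE, hb]

theorem qU_le_self (x : A18) : qU x ≤ x := by
  induction x using A18.induction <;> simp [Prod.Lex.toLex_le_toLex]

theorem qU_qU (x : A18) : qU (qU x) = qU x := by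
  induction x using A18.induction <;> simp

theorem qU_mono : Monotone qU := by
  intro x y
  induction x using A18.induction <;> induction y using A18.induction <;>
    simp [Prod.Lex.toLex_le_toLex]
  omega

theorem le_qE_self (x : A18) : x ≤ qE x := by
  induction x using A18.induction <;> simp [Prod.Lex.toLex_le_toLex]
  split_ifs <;> omega

theorem qU_qE (x : A18) : qU (qE x) = qE x := by
  induction x using A18.induction <;> simp

theorem qE_le_qU_of_le {x y : A18} : x ≤ qU y → qE x ≤ qU y := by
  induction x using A18.induction <;> induction y using A18.induction <;>
    simp [Prod.Lex.toLex_le_toLex]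
  split_ifs <;> omega

theorem isGreatest_qU (x : A18) : IsGreatest {b | b ∈ Set.range qU ∧ b ≤ x} (qU x) := by
  refine ⟨⟨⟨x, rfl⟩, qU_le_self x⟩, ?_⟩
  rintro _ ⟨⟨y, rfl⟩, hy⟩
  simpa only [qU_qU] using qU_mono hy

theorem isLeast_qE (x : A18) : IsLeast {b | b ∈ Set.range qU ∧ x ≤ b} (qE x) := by
  refine ⟨⟨⟨qE x, qU_qE x⟩, le_qE_self x⟩, ?_⟩
  rintro _ ⟨⟨y, rfl⟩, hy⟩
  exact qE_le_qU_of_le hy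

theorem A18_monadicGodel :
    (∀ x : A18, gimp (qU x) x = ⊤) ∧
    (∀ x y : A18, qU (gimp x (qU y)) = gimp (qE x) (qU y)) ∧
    (∀ x y : A18, qU (gimp (qU x) y) = gimp (qU x) (qU y)) ∧
    (∀ x y : A18, qU (qE x ⊔ y) = qE x ⊔ qU y) := by
  have hB : ⊤ ∈ Set.range qU := ⟨⊤, rfl⟩
  exact ⟨fun x => godelImp_of_le (qU_le_self x),
    interior_godelImp_interior_right hB isGreatest_qU isLeast_qE,
    interior_godelImp_interior_left hB isGreatest_qU,
    interior_closure_sup isGreatest_qU isLeast_qE⟩
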